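/- arXiv:2103.15243 — 2 statements merged into one kernel-verified Lean document; each statement's English description precedes it below -/
import Mathlib

section
/- Lower semicontinuity of integral functionals with convex integrands under weak derivative convergence: let l : ℝ^d → ℝ be convex and continuous, and let v_k → v weakly in L²([0,T], ℝ^d) with v_k bounded in L². Then ∫_0^T l(v(t)) dt ≤ liminf_{k→∞} ∫_0^T l(v_k(t)) dt, provided l is bounded below by an affine function. -/
/-!
A convex continuous `l` is the supremum of countably many continuous affine minorants, so by
monotone convergence it suffices to treat their finite maxima `F`. Selecting measurably an index
that attains the maximum at `v t` writes `F (v t) = ⟪v t, g t⟫ + b t` with bounded `g` and `b`,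
while `⟪u_k t, g t⟫ + b t ≤ F (u_k t)`. Cutting `g` and `b` off to the set where
`⟪v t, g t⟫ + b t ≥ 0` turns the integral of its positive part into a weakly continuous linear
functional of `v`.
-/

open MeasureTheory Filter Set Topology
open scoped RealInnerProductSpace

section WeakL2

variable {α E : Type*} [MeasurableSpace α] {μ : Measure α}
  [NormedAddCommGroup E] [InnerProductSpace ℝ E]

def TendstoWeaklyL2 (μ : Measure α) (u : ℕ → α → E) (v : α → E) : Prop :=
  ∀ g : α → E, MemLp g 2 μ →
    Tendsto (fun k => ∫ t, ⟪u k t, g t⟫ ∂μ) atTop (𝓝 (∫ t, ⟪v t, g t⟫ ∂μ))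

theorem MeasureTheory.MemLp.integrable_inner {f g : α → E} (hf : MemLp f 2 μ)
    (hg : MemLp g 2 μ) : Integrable (fun t => ⟪f t, g t⟫) μ :=
  (L2.integrable_inner (𝕜 := ℝ) (hf.toLp f) (hg.toLp g)).congr <| by
    filter_upwards [hf.coeFn_toLp, hg.coeFn_toLp] with t hft hgt
    rw [hft, hgt]

theorem MeasureTheory.ofReal_integral_le_lintegral_ofReal (f : α → ℝ) :
    ENNReal.ofReal (∫ t, f t ∂μ) ≤ ∫⁻ t, ENNReal.ofReal (f t) ∂μ := by
  by_cases hf : Integrable f μ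
  · calc ENNReal.ofReal (∫ t, f t ∂μ) ≤ ENNReal.ofReal (∫ t, max (f t) 0 ∂μ) :=
          ENNReal.ofReal_le_ofReal (integral_mono hf hf.pos_part fun t => le_max_left _ _)
      _ = ∫⁻ t, ENNReal.ofReal (max (f t) 0) ∂μ :=
          ofReal_integral_eq_lintegral_ofReal hf.pos_part (ae_of_all _ fun t => le_max_right _ _)
      _ = ∫⁻ t, ENNReal.ofReal (f t) ∂μ := by simp
  · simp [integral_undef hf]

namespace TendstoWeaklyL2

variable {u : ℕ → α → E} {v : α → E}

theorem tendsto_integral_inner_add (hweak : TendstoWeaklyL2 μ u v)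
    (hu : ∀ k, MemLp (u k) 2 μ) (hv : MemLp v 2 μ) {g : α → E} (hg : MemLp g 2 μ)
    {b : α → ℝ} (hb : Integrable b μ) :
    Tendsto (fun k => ∫ t, (⟪u k t, g t⟫ + b t) ∂μ) atTop
      (𝓝 (∫ t, (⟪v t, g t⟫ + b t) ∂μ)) := by
  simp only [integral_add ((hu _).integrable_inner hg) hb,
    integral_add (hv.integrable_inner hg) hb]
  exact (hweak g hg).add_const _

theorem lintegral_ofReal_inner_add_le_liminf (hweak : TendstoWeaklyL2 μ u v)
    (hu : ∀ k, MemLp (u k) 2 μ) (hv : MemLp v 2 μ) {g : α → E} (hg : MemLp g 2 μ)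
    {b : α → ℝ} (hb : Integrable b μ) :
    ∫⁻ t, ENNReal.ofReal (⟪v t, g t⟫ + b t) ∂μ ≤
      atTop.liminf fun k => ∫⁻ t, ENNReal.ofReal (⟪u k t, g t⟫ + b t) ∂μ := by
  set S := {t | 0 ≤ ⟪v t, g t⟫ + b t}
  have hS : NullMeasurableSet S μ :=
    nullMeasurableSet_le aemeasurable_const ((hv.integrable_inner hg).add hb).aemeasurable
  have hgS : MemLp (S.indicator g) 2 μ :=
    hg.mono (hg.1.indicator₀ hS) (ae_of_all _ fun t => norm_indicator_le_norm_self g t)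
  have hbS : Integrable (S.indicator b) μ :=
    hb.mono (hb.1.indicator₀ hS) (ae_of_all _ fun t => norm_indicator_le_norm_self b t)
  have hind : ∀ (w : α → E) t, ⟪w t, S.indicator g t⟫ + S.indicator b t =
      S.indicator (fun t => ⟪w t, g t⟫ + b t) t := by
    intro w t
    by_cases ht : t ∈ S <;> simp [ht]
  have hpos : ∀ t, ENNReal.ofReal (⟪v t, g t⟫ + b t) =
      ENNReal.ofReal (⟪v t, S.indicator g t⟫ + S.indicator b t) := by
    intro t
    rw [hind]
    by_cases ht : t ∈ S
    · simp [ht]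
    · simp [ht, ENNReal.ofReal_of_nonpos (not_le.1 ht).le]
  calc ∫⁻ t, ENNReal.ofReal (⟪v t, g t⟫ + b t) ∂μ
      = ∫⁻ t, ENNReal.ofReal (⟪v t, S.indicator g t⟫ + S.indicator b t) ∂μ :=
        lintegral_congr hpos
    _ = ENNReal.ofReal (∫ t, (⟪v t, S.indicator g t⟫ + S.indicator b t) ∂μ) := by
        refine (ofReal_integral_eq_lintegral_ofReal ((hv.integrable_inner hgS).add hbS)
          (ae_of_all _ fun t => ?_)).symm
        simp only [Pi.zero_apply, Pi.add_apply, hind]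
        exact indicator_nonneg (fun t ht => ht) t
    _ = atTop.liminf fun k =>
          ENNReal.ofReal (∫ t, (⟪u k t, S.indicator g t⟫ + S.indicator b t) ∂μ) :=
        ((ENNReal.continuous_ofReal.tendsto _).comp
          (hweak.tendsto_integral_inner_add hu hv hgS hbS)).liminf_eq.symm
    _ ≤ atTop.liminf fun k =>
          ∫⁻ t, ENNReal.ofReal (⟪u k t, S.indicator g t⟫ + S.indicator b t) ∂μ :=
        liminf_le_liminf (Eventually.of_forall fun k => ofReal_integral_le_lintegral_ofReal _)
    _ ≤ atTop.liminf fun k => ∫⁻ t, ENNReal.ofReal (⟪u k t, g t⟫ + b t) ∂μ := by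
        refine liminf_le_liminf (Eventually.of_forall fun k => lintegral_mono fun t => ?_)
        rw [hind]
        by_cases ht : t ∈ S <;> simp [ht]

end TendstoWeaklyL2
end WeakL2

theorem exists_measurable_index_partialSups_eq {X : Type*} [MeasurableSpace X]
    {a : ℕ → X → ℝ} (ha : ∀ n, Measurable (a n)) (N : ℕ) :
    ∃ σ : X → ℕ, Measurable σ ∧ ∀ x, σ x ≤ N ∧ a (σ x) x = partialSups (a · x) N := by
  classical
  have hmax : Measurable fun x => partialSups (a · x) N := by
    simp_rw [← Pi.partialSups_apply, partialSups_apply]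
    exact Finset.measurable_sup' _ fun n _ => ha n
  have hex : ∀ x, ∃ n, n ≤ N ∧ a n x = partialSups (a · x) N := fun x =>
    (exists_partialSups_eq (a · x) N).imp fun _ hn => ⟨hn.1, hn.2.symm⟩
  exact ⟨fun x => Nat.find (hex x),
    measurable_find hex fun n => (MeasurableSet.const _).inter (measurableSet_eq_fun (ha n) hmax),
    fun x => Nat.find_spec (hex x)⟩

theorem tendsto_partialSups_atTop_ciSup {α : Type*} [ConditionallyCompleteLattice α]
    [TopologicalSpace α] [SupConvergenceClass α] {f : ℕ → α} (hf : BddAbove (range f)) :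
    Tendsto (partialSups f) atTop (𝓝 (⨆ n, f n)) := by
  rw [← ciSup_partialSups_eq hf]
  exact tendsto_atTop_ciSup (partialSups f).monotone (bddAbove_range_partialSups.2 hf)

theorem TendstoWeaklyL2.lintegral_ofReal_partialSups_le_liminf {α E : Type*}
    [MeasurableSpace α] {μ : Measure α} [IsFiniteMeasure μ]
    [NormedAddCommGroup E] [InnerProductSpace ℝ E] [CompleteSpace E]
    [MeasurableSpace E] [BorelSpace E] {u : ℕ → α → E} {v : α → E}
    (hweak : TendstoWeaklyL2 μ u v) (hu : ∀ k, MemLp (u k) 2 μ) (hv : MemLp v 2 μ)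
    (L : ℕ → StrongDual ℝ E) (β : ℕ → ℝ) (N : ℕ) :
    ∫⁻ t, ENNReal.ofReal (partialSups (fun n => L n (v t) + β n) N) ∂μ ≤
      atTop.liminf fun k =>
        ∫⁻ t, ENNReal.ofReal (partialSups (fun n => L n (u k t) + β n) N) ∂μ := by
  obtain ⟨σ, hσ, hσ_max⟩ := exists_measurable_index_partialSups_eq
    (a := fun n w => L n w + β n) (fun n => by fun_prop) N
  set g : α → E := fun t => (InnerProductSpace.toDual ℝ E).symm (L (σ (v t)))
  set b : α → ℝ := fun t => β (σ (v t))
  have hσv : AEMeasurable (fun t => σ (v t)) μ := hσ.comp_aemeasurable hv.1.aemeasurable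
  have hg : MemLp g 2 μ := by
    refine MemLp.of_bound ((AEStronglyMeasurable.of_discrete
      (f := fun n => (InnerProductSpace.toDual ℝ E).symm (L n))).comp_aemeasurable hσv)
      (partialSups (fun n => ‖L n‖) N) (ae_of_all _ fun t => ?_)
    simpa [g] using le_partialSups_of_le (fun n => ‖L n‖) (hσ_max (v t)).1
  have hb : Integrable b μ := by
    refine Integrable.of_bound ((AEStronglyMeasurable.of_discrete (f := β)).comp_aemeasurable hσv)
      (partialSups (fun n => ‖β n‖) N) (ae_of_all _ fun t => ?_)
    exact le_partialSups_of_le (fun n => ‖β n‖) (hσ_max (v t)).1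
  have hinner : ∀ w t, ⟪w, g t⟫ + b t = L (σ (v t)) w + β (σ (v t)) := by
    intro w t
    rw [real_inner_comm, InnerProductSpace.toDual_symm_apply]
  calc ∫⁻ t, ENNReal.ofReal (partialSups (fun n => L n (v t) + β n) N) ∂μ
      = ∫⁻ t, ENNReal.ofReal (⟪v t, g t⟫ + b t) ∂μ := by
        simp_rw [hinner, (hσ_max _).2]
    _ ≤ atTop.liminf fun k => ∫⁻ t, ENNReal.ofReal (⟪u k t, g t⟫ + b t) ∂μ :=
        hweak.lintegral_ofReal_inner_add_le_liminf hu hv hg hb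
    _ ≤ _ := by
        refine liminf_le_liminf (Eventually.of_forall fun k => lintegral_mono fun t => ?_)
        rw [hinner]
        exact ENNReal.ofReal_le_ofReal
          (le_partialSups_of_le (fun n => L n (u k t) + β n) (hσ_max (v t)).1)

theorem weak_lsc_convex_integrand_general {d : ℕ} (T : ℝ)
    (l : EuclideanSpace ℝ (Fin d) → ℝ)
    (hconv : ConvexOn ℝ Set.univ l) (hcont : Continuous l)
    (vk : ℕ → ℝ → EuclideanSpace ℝ (Fin d)) (v : ℝ → EuclideanSpace ℝ (Fin d))
    (hmem : ∀ k, MemLp (vk k) 2 (volume.restrict (Ioc 0 T)))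
    (hv : MemLp v 2 (volume.restrict (Ioc 0 T)))
    (hweak : ∀ g : ℝ → EuclideanSpace ℝ (Fin d), MemLp g 2 (volume.restrict (Ioc 0 T)) →
      Tendsto (fun k => ∫ t in Ioc 0 T, (inner ℝ (vk k t) (g t) : ℝ)) atTop
        (nhds (∫ t in Ioc 0 T, (inner ℝ (v t) (g t) : ℝ)))) :
    ∫⁻ t in Ioc 0 T, ENNReal.ofReal (l (v t)) ≤
      Filter.atTop.liminf fun k => ∫⁻ t in Ioc 0 T, ENNReal.ofReal (l (vk k t)) := by
  have : IsFiniteMeasure (volume.restrict (Ioc 0 T)) :=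
    isFiniteMeasure_restrict.2 measure_Ioc_lt_top.ne
  obtain ⟨L, β, hle, hsup⟩ := hconv.real_univ_sSup_of_nat_affine_eq hcont.lowerSemicontinuous
  have hmax : ∀ w, Tendsto (partialSups fun n => L n w + β n) atTop (𝓝 (l w)) := fun w => by
    have hw : ⨆ n, L n w + β n = l w := by
      simpa only [iSup_apply, Pi.add_apply, Function.const_apply] using congrFun hsup w
    exact hw ▸ tendsto_partialSups_atTop_ciSup ⟨l w, forall_mem_range.2 fun n => hle n w⟩
  have hcontN : ∀ N, Continuous fun w => partialSups (fun n => L n w + β n) N := fun N =>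
    Continuous.partialSups_apply fun n _ => (L n).continuous.add continuous_const
  have hlim := lintegral_tendsto_of_tendsto_of_monotone (μ := volume.restrict (Ioc 0 T))
    (f := fun N t => ENNReal.ofReal (partialSups (fun n => L n (v t) + β n) N))
    (F := fun t => ENNReal.ofReal (l (v t)))
    (fun N => ((hcontN N).measurable.comp_aemeasurable hv.1.aemeasurable).ennreal_ofReal)
    (ae_of_all _ fun t N M hNM => ENNReal.ofReal_le_ofReal ((partialSups _).monotone hNM))
    (ae_of_all _ fun t => (ENNReal.continuous_ofReal.tendsto _).comp (hmax (v t)))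
  have hweak' : TendstoWeaklyL2 (volume.restrict (Ioc 0 T)) vk v := hweak
  refine le_of_tendsto' hlim fun N =>
    (hweak'.lintegral_ofReal_partialSups_le_liminf hmem hv L β N).trans ?_
  exact liminf_le_liminf (Eventually.of_forall fun k => lintegral_mono fun t =>
    ENNReal.ofReal_le_ofReal (partialSups_le _ _ _ fun n _ => hle n (vk k t)))

/-- Lower semicontinuity of integral functionals with convex continuous integrands bounded
below by an affine function, under weak `L²` convergence of a bounded sequence:
`∫ l(v) ≤ liminf ∫ l(v_k)` (integrals taken in `[0,∞]`). -/
theorem weak_lsc_convex_integrand {d : ℕ} (T : ℝ)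
    (l : EuclideanSpace ℝ (Fin d) → ℝ)
    (hconv : ConvexOn ℝ Set.univ l) (hcont : Continuous l)
    (c : EuclideanSpace ℝ (Fin d)) (d₀ : ℝ)
    (hbelow : ∀ w, (inner ℝ c w : ℝ) + d₀ ≤ l w)
    (vk : ℕ → ℝ → EuclideanSpace ℝ (Fin d)) (v : ℝ → EuclideanSpace ℝ (Fin d))
    (hmem : ∀ k, MemLp (vk k) 2 (volume.restrict (Ioc 0 T)))
    (hv : MemLp v 2 (volume.restrict (Ioc 0 T)))
    (hbdd : ∃ M : ℝ, ∀ k, ∫ t in Ioc 0 T, ‖vk k t‖ ^ 2 ≤ M)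
    (hweak : ∀ g : ℝ → EuclideanSpace ℝ (Fin d), MemLp g 2 (volume.restrict (Ioc 0 T)) →
      Tendsto (fun k => ∫ t in Ioc 0 T, (inner ℝ (vk k t) (g t) : ℝ)) atTop
        (nhds (∫ t in Ioc 0 T, (inner ℝ (v t) (g t) : ℝ)))) :
    ∫⁻ t in Ioc 0 T, ENNReal.ofReal (l (v t)) ≤
      Filter.atTop.liminf fun k => ∫⁻ t in Ioc 0 T, ENNReal.ofReal (l (vk k t)) :=
  weak_lsc_convex_integrand_general T l hconv hcont vk v hmem hv hweak
end

section
/- Piecewise linear interpolation L² error bound: let x̄ ∈ W^{1,2}([0,T],ℝ^n) with the derivative of bounded variation var(ẋ̄,[0,T]) ≤ μ. For a uniform mesh t_j = jT/k, define the piecewise linear interpolant x^k with x^k(t_j) = x̄(t_j). Then ∫_0^T ‖ẋ^k(t) − ẋ̄(t)‖² dt ≤ 2 (T/k) μ² + c·4^{−k} for some constant c depending only on T, provided the derivative is approximated pointwise up to 2^{−k} at suitably chosen sample points. -/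
/-!
On a mesh interval `[a, b]` the slope of the interpolant is the mean value of `ẋ̄` over `[a, b]`,
so it differs from `ẋ̄(t)` by at most the variation `v` of `ẋ̄` on `[a, b]`, and the squared error
integrates to at most `v² (b - a)`. Since the variation is additive over the mesh intervals,
`∑ v_j² ≤ (∑ v_j)² ≤ μ²`, which gives the bound `(T/k) μ²`, i.e. the claim with `c = 0`.
-/

open MeasureTheory Set Finset

/-- The uniform mesh point `t_j = j·T/k`. -/
noncomputable def meshPt (T : ℝ) (k j : ℕ) : ℝ := j * (T / k)

section

variable {E : Type*}

theorem eVariationOn.sum_Icc_eq [PseudoEMetricSpace E] (f : ℝ → E) {u : ℕ → ℝ}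
    (hu : Monotone u) (k : ℕ) :
    ∑ j ∈ range k, eVariationOn f (Icc (u j) (u (j + 1))) =
      eVariationOn f (Icc (u 0) (u k)) := by
  induction k with
  | zero => simp
  | succ k ih =>
    rw [sum_range_succ, ih]
    simpa only [univ_inter] using
      eVariationOn.Icc_add_Icc f (hu k.zero_le) (hu k.le_succ) (mem_univ _)

theorem norm_sub_le_toReal_eVariationOn [SeminormedAddCommGroup E] {f : ℝ → E} {s : Set ℝ}
    (hf : eVariationOn f s ≠ ⊤) {x y : ℝ} (hx : x ∈ s) (hy : y ∈ s) :
    ‖f x - f y‖ ≤ (eVariationOn f s).toReal := by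
  rw [← dist_eq_norm, ← ENNReal.toReal_ofReal dist_nonneg, ← edist_dist]
  exact ENNReal.toReal_mono hf (eVariationOn.edist_le f hx hy)

variable [NormedAddCommGroup E] [NormedSpace ℝ E] [CompleteSpace E] {f : ℝ → E} {a b : ℝ}

theorem norm_inv_smul_integral_sub_le (hab : a < b) (hf : IntervalIntegrable f volume a b)
    {v t : ℝ} (hv : ∀ τ ∈ Ioc a b, ‖f τ - f t‖ ≤ v) :
    ‖(b - a)⁻¹ • (∫ τ in a..b, f τ) - f t‖ ≤ v := by
  have hba : 0 < b - a := sub_pos.2 hab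
  have hmean : (b - a)⁻¹ • (∫ τ in a..b, f τ) - f t = (b - a)⁻¹ • ∫ τ in a..b, (f τ - f t) := by
    rw [intervalIntegral.integral_sub hf intervalIntegrable_const, intervalIntegral.integral_const,
      smul_sub, smul_smul, inv_mul_cancel₀ hba.ne', one_smul]
  have hint : ‖∫ τ in a..b, (f τ - f t)‖ ≤ v * |b - a| :=
    intervalIntegral.norm_integral_le_of_norm_le_const fun τ hτ ↦
      hv τ (by rwa [uIoc_of_le hab.le] at hτ)
  calc ‖(b - a)⁻¹ • (∫ τ in a..b, f τ) - f t‖ = (b - a)⁻¹ * ‖∫ τ in a..b, (f τ - f t)‖ := by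
        rw [hmean, norm_smul, Real.norm_of_nonneg (inv_nonneg.2 hba.le)]
    _ ≤ (b - a)⁻¹ * (v * (b - a)) := by gcongr; rwa [abs_of_pos hba] at hint
    _ = v := by field_simp

theorem integral_norm_inv_smul_integral_sub_sq_le (hab : a < b)
    (hf : IntervalIntegrable f volume a b) (hV : eVariationOn f (Icc a b) ≠ ⊤) :
    ∫ t in a..b, ‖(b - a)⁻¹ • (∫ τ in a..b, f τ) - f t‖ ^ 2 ≤
      (eVariationOn f (Icc a b)).toReal ^ 2 * (b - a) := by
  have hpt : ∀ t ∈ Ioc a b,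
      ‖(b - a)⁻¹ • (∫ τ in a..b, f τ) - f t‖ ≤ (eVariationOn f (Icc a b)).toReal :=
    fun t ht ↦ norm_inv_smul_integral_sub_le hab hf fun τ hτ ↦
      norm_sub_le_toReal_eVariationOn hV (Ioc_subset_Icc_self hτ) (Ioc_subset_Icc_self ht)
  calc ∫ t in a..b, ‖(b - a)⁻¹ • (∫ τ in a..b, f τ) - f t‖ ^ 2
      ≤ ‖∫ t in a..b, ‖(b - a)⁻¹ • (∫ τ in a..b, f τ) - f t‖ ^ 2‖ := le_abs_self _
    _ ≤ (eVariationOn f (Icc a b)).toReal ^ 2 * |b - a| := by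
      refine intervalIntegral.norm_integral_le_of_norm_le_const fun t ht ↦ ?_
      rw [uIoc_of_le hab.le] at ht
      rw [Real.norm_of_nonneg (by positivity)]
      exact pow_le_pow_left₀ (norm_nonneg _) (hpt t ht) 2
    _ = (eVariationOn f (Icc a b)).toReal ^ 2 * (b - a) := by rw [abs_of_pos (sub_pos.2 hab)]

end

theorem meshPt_zero (T : ℝ) (k : ℕ) : meshPt T k 0 = 0 := by simp [meshPt]

theorem meshPt_self (T : ℝ) {k : ℕ} (hk : k ≠ 0) : meshPt T k k = T := by
  simp [meshPt, mul_div_cancel₀, hk]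

theorem meshPt_succ_sub (T : ℝ) (k j : ℕ) : meshPt T k (j + 1) - meshPt T k j = T / k := by
  simp only [meshPt]; push_cast; ring

theorem monotone_meshPt {T : ℝ} (hT : 0 ≤ T) (k : ℕ) : Monotone (meshPt T k) :=
  monotone_nat_of_le_succ fun j ↦ by rw [← sub_nonneg, meshPt_succ_sub]; positivity

theorem meshPt_mem_Icc {T : ℝ} (hT : 0 ≤ T) {k j : ℕ} (hk : k ≠ 0) (hj : j ≤ k) :
    meshPt T k j ∈ Icc 0 T :=
  ⟨(meshPt_zero T k).symm.trans_le (monotone_meshPt hT k j.zero_le),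
    (monotone_meshPt hT k hj).trans_eq (meshPt_self T hk)⟩

/-- Piecewise linear interpolation `L²` error bound: for `xbar ∈ W^{1,2}` whose derivative `x'`
has variation at most `μ` on `[0,T]`, the piecewise linear interpolant on the uniform mesh
satisfies `∫₀ᵀ ‖ẋ^k − ẋ̄‖² ≤ 2(T/k)μ² + c·4^{−k}` for a constant `c` depending only on `T`,
provided sample points `s_j` realize the sup of `‖ẋ̄(t_j) − ẋ̄(·)‖` up to `2^{−k}`. -/
theorem interpolation_L2_error (T : ℝ) (hT : 0 < T) :
    ∃ c : ℝ, ∀ (n : ℕ) (xbar x' : ℝ → EuclideanSpace ℝ (Fin n)) (μ : ℝ) (k : ℕ),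
      0 < k → 0 ≤ μ →
      (∀ a b, a ∈ Icc 0 T → b ∈ Icc 0 T → xbar b - xbar a = ∫ τ in a..b, x' τ) →
      (∀ a b, a ∈ Icc 0 T → b ∈ Icc 0 T → IntervalIntegrable x' volume a b) →
      IntegrableOn (fun t => ‖x' t‖ ^ 2) (Icc 0 T) volume →
      eVariationOn x' (Icc 0 T) ≤ ENNReal.ofReal μ →
      (∃ sj : ℕ → ℝ, ∀ j < k, sj j ∈ Ico (meshPt T k j) (meshPt T k (j + 1)) ∧
        ∀ u ∈ Icc (meshPt T k j) (meshPt T k (j + 1)),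
          ‖x' (meshPt T k j) - x' u‖ ≤ ‖x' (meshPt T k j) - x' (sj j)‖ + (2:ℝ)⁻¹ ^ k) →
      ∑ j ∈ range k, (∫ t in meshPt T k j..meshPt T k (j + 1),
          ‖(T / k)⁻¹ • (xbar (meshPt T k (j + 1)) - xbar (meshPt T k j)) - x' t‖ ^ 2)
        ≤ 2 * (T / k) * μ ^ 2 + c * (4:ℝ)⁻¹ ^ k := by
  refine ⟨0, fun n xbar x' μ k hk hμ hFTC hInt _ hvar _ ↦ ?_⟩
  set t := meshPt T k
  set V := fun j ↦ eVariationOn x' (Icc (t j) (t (j + 1)))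
  have hh : 0 < T / k := by positivity
  have ht : ∀ j ≤ k, t j ∈ Icc 0 T := fun j ↦ meshPt_mem_Icc hT.le hk.ne'
  have hV : ∀ j < k, V j ≠ ⊤ := fun j hj ↦
    ((eVariationOn.mono x' (Icc_subset_Icc (ht j hj.le).1 (ht _ hj).2)).trans hvar).trans_lt
      ENNReal.ofReal_lt_top |>.ne
  have hsum : ∑ j ∈ range k, (V j).toReal ≤ μ := by
    rw [← ENNReal.toReal_sum fun j hj ↦ hV j (mem_range.1 hj)]
    refine ENNReal.toReal_le_of_le_ofReal hμ ?_
    rwa [eVariationOn.sum_Icc_eq x' (monotone_meshPt hT.le k), meshPt_zero, meshPt_self T hk.ne']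
  have hpiece : ∀ j < k, ∫ s in t j..t (j + 1),
      ‖(T / k)⁻¹ • (xbar (t (j + 1)) - xbar (t j)) - x' s‖ ^ 2 ≤ (V j).toReal ^ 2 * (T / k) := by
    intro j hj
    have hstep : t (j + 1) - t j = T / k := meshPt_succ_sub T k j
    have := integral_norm_inv_smul_integral_sub_sq_le (by linarith)
      (hInt _ _ (ht j hj.le) (ht _ hj)) (hV j hj)
    rwa [hstep, ← hFTC _ _ (ht j hj.le) (ht _ hj)] at this
  calc _ ≤ ∑ j ∈ range k, (V j).toReal ^ 2 * (T / k) :=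
        sum_le_sum fun j hj ↦ hpiece j (mem_range.1 hj)
    _ = (∑ j ∈ range k, (V j).toReal ^ 2) * (T / k) := (sum_mul ..).symm
    _ ≤ (∑ j ∈ range k, (V j).toReal) ^ 2 * (T / k) := by
        gcongr; exact sum_sq_le_sq_sum_of_nonneg fun j _ ↦ ENNReal.toReal_nonneg
    _ ≤ μ ^ 2 * (T / k) := by gcongr
    _ ≤ 2 * (T / k) * μ ^ 2 + 0 * (4:ℝ)⁻¹ ^ k := by nlinarith [sq_nonneg μ]
end
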